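/- The pair correlation function g^{(α)}(r) = [s^α(α(1−s) − s(1−s^α))² + (α s^α(1−s) − (1−s^α))²]/(1−s^α)³ with s = 1 − r², satisfies g^{(α)}(r) → 0 as r → 0⁺ for every α > 0. -/

import Mathlib

open Real Filter Topology

/-- The pair correlation function of the zeros of the hyperbolic Gaussian
analytic function of parameter `α`, with `s = 1 − r²`. -/
noncomputable def pairCorrelation (α r : ℝ) : ℝ :=
  let s := 1 - r ^ 2
  (s ^ α * (α * (1 - s) - s * (1 - s ^ α)) ^ 2
    + (α * s ^ α * (1 - s) - (1 - s ^ α)) ^ 2) / (1 - s ^ α) ^ 3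

section Aux

variable {α : ℝ}

/-- derivative of `t ↦ (1-t)^β` at `t` with `t < 1`. -/
lemma hasDerivAt_one_sub_rpow (β : ℝ) {t : ℝ} (ht : t < 1) :
    HasDerivAt (fun t : ℝ => (1 - t) ^ β) (-(β * (1 - t) ^ (β - 1))) t := by
  have h1t : (0:ℝ) < 1 - t := by linarith
  have hder1 : HasDerivAt (fun t : ℝ => 1 - t) (-1) t := by
    simpa using (hasDerivAt_id t).const_sub 1
  have := (Real.hasDerivAt_rpow_const (x := 1 - t) (p := β) (Or.inl h1t.ne')).comp t hder1
  simpa [Function.comp_def, mul_comm, mul_neg] using this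

lemma rpow_mul_base {x : ℝ} (hx : 0 < x) (β : ℝ) : x ^ (β - 1) * x = x ^ β := by
  rw [Real.rpow_sub_one hx.ne' β]
  field_simp

/-- continuity of `t ↦ (1-t)^β` at `0`, with value 1. -/
lemma tendsto_one_sub_rpow (β : ℝ) :
    Tendsto (fun t : ℝ => (1 - t) ^ β) (𝓝 0) (𝓝 1) := by
  have h1 : ContinuousAt (fun x : ℝ => x ^ β) 1 :=
    Real.continuousAt_rpow_const _ _ (Or.inl one_ne_zero)
  have h2 : ContinuousAt (fun t : ℝ => 1 - t) 0 := by fun_prop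
  have h := ContinuousAt.comp (by simpa using h1) h2
  simpa [Function.comp_def] using h.tendsto

end Aux

/-- Short-range repulsion of zeros: for every `α > 0`,
`g^{(α)}(r) → 0` as `r → 0⁺`. -/
theorem pairCorrelation_tendsto_zero (α : ℝ) (hα : 0 < α) :
    Tendsto (pairCorrelation α) (nhdsWithin 0 (Set.Ioi 0)) (nhds 0) := by
  -- notation
  set p : ℝ → ℝ := fun t => (1 - t) ^ α with hp_def
  set q : ℝ → ℝ := fun t => (1 - t) ^ (α - 1) with hq_def
  set w : ℝ → ℝ := fun t => (1 - t) ^ (α - 2) with hw_def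
  set F : ℝ → ℝ := fun t => α * t - (1 - t) * (1 - p t) with hF_def
  set F2 : ℝ → ℝ := fun t => α + 1 - p t - α * p t with hF2_def
  set F3 : ℝ → ℝ := fun t => α * q t + α ^ 2 * q t with hF3_def
  set G : ℝ → ℝ := fun t => (1 - p t) ^ 2 with hG_def
  set G2 : ℝ → ℝ := fun t => 2 * α * (1 - p t) * q t with hG2_def
  set G3 : ℝ → ℝ := fun t => 2 * α * (α * q t ^ 2 - (α - 1) * (1 - p t) * w t) with hG3_def
  set H : ℝ → ℝ := fun t => α * p t * t - (1 - p t) with hH_def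
  set H2 : ℝ → ℝ := fun t => α * p t - α ^ 2 * t * q t - α * q t with hH2_def
  set H3 : ℝ → ℝ := fun t => -(α ^ 2 * q t) - α ^ 2 * q t + α ^ 2 * (α - 1) * t * w t
      + α * (α - 1) * w t with hH3_def
  have hIoo : Set.Ioo (0:ℝ) 1 ∈ 𝓝[>] (0:ℝ) :=
    Ioo_mem_nhdsGT_of_mem ⟨le_refl 0, zero_lt_one⟩
  -- basic facts on Ioo 0 1
  have hpos : ∀ t ∈ Set.Ioo (0:ℝ) 1, 0 < 1 - t := fun t ht => by
    have := ht.2; linarith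
  have hplt : ∀ t ∈ Set.Ioo (0:ℝ) 1, 0 < 1 - p t := by
    intro t ht
    have h1 : p t < 1 := Real.rpow_lt_one (by linarith [hpos t ht]) (by linarith [ht.1]) hα
    linarith
  have hqpos : ∀ t ∈ Set.Ioo (0:ℝ) 1, 0 < q t := fun t ht =>
    Real.rpow_pos_of_pos (hpos t ht) _
  -- derivatives
  have hderp : ∀ t ∈ Set.Ioo (0:ℝ) 1, HasDerivAt p (-(α * q t)) t := fun t ht =>
    hasDerivAt_one_sub_rpow α ht.2
  have hderq : ∀ t ∈ Set.Ioo (0:ℝ) 1, HasDerivAt q (-((α - 1) * w t)) t := by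
    intro t ht
    have := hasDerivAt_one_sub_rpow (α - 1) ht.2
    simpa [hq_def, hw_def, show α - 1 - 1 = α - 2 by ring] using this
  have hderF : ∀ t ∈ Set.Ioo (0:ℝ) 1, HasDerivAt F (F2 t) t := by
    intro t ht
    have h1 : HasDerivAt (fun t : ℝ => 1 - t) (-1) t := by
      simpa using (hasDerivAt_id t).const_sub 1
    have h2 : HasDerivAt (fun t => 1 - p t) (α * q t) t := by
      simpa using (hderp t ht).const_sub 1
    have := ((hasDerivAt_id t).const_mul α).sub (h1.mul h2)
    refine this.congr_deriv ?_
    have hb := rpow_mul_base (hpos t ht) α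
    simp only [hF2_def, hq_def, hp_def] at *
    nlinarith [hb]
  have hderG : ∀ t ∈ Set.Ioo (0:ℝ) 1, HasDerivAt G (G2 t) t := by
    intro t ht
    have h2 : HasDerivAt (fun t => 1 - p t) (α * q t) t := by
      simpa using (hderp t ht).const_sub 1
    have := h2.pow 2
    refine this.congr_deriv ?_
    simp only [hG2_def]; ring
  have hderH : ∀ t ∈ Set.Ioo (0:ℝ) 1, HasDerivAt H (H2 t) t := by
    intro t ht
    have h2 : HasDerivAt (fun t => 1 - p t) (α * q t) t := by
      simpa using (hderp t ht).const_sub 1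
    have := (((hderp t ht).const_mul α).mul (hasDerivAt_id t)).sub h2
    refine this.congr_deriv ?_
    simp only [hH2_def, id_eq]; ring
  have hderF2 : ∀ t ∈ Set.Ioo (0:ℝ) 1, HasDerivAt F2 (F3 t) t := by
    intro t ht
    have := ((hasDerivAt_const t (α + 1)).sub (hderp t ht)).sub ((hderp t ht).const_mul α)
    refine this.congr_deriv ?_
    simp only [hF3_def]; ring
  have hderG2 : ∀ t ∈ Set.Ioo (0:ℝ) 1, HasDerivAt G2 (G3 t) t := by
    intro t ht
    have h2 : HasDerivAt (fun t => 1 - p t) (α * q t) t := by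
      simpa using (hderp t ht).const_sub 1
    have := ((h2.const_mul (2 * α)).mul (hderq t ht))
    have h3 := (h2.mul (hderq t ht)).const_mul (2 * α)
    convert h3 using 1
    · rfl
    · rfl
    · funext y; simp only [hG2_def, Pi.mul_apply]; ring
    · simp only [hG3_def]; ring
  have hderH2 : ∀ t ∈ Set.Ioo (0:ℝ) 1, HasDerivAt H2 (H3 t) t := by
    intro t ht
    have h1 := (hderp t ht).const_mul α
    have h2 := (((hasDerivAt_id t).const_mul (α ^ 2)).mul (hderq t ht))
    have h3 := (hderq t ht).const_mul α
    have := (h1.sub h2).sub h3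
    refine this.congr_deriv ?_
    simp only [hH3_def, id_eq]; ring
  -- limits of p, q, w at 0 within Ioi
  have hlp : Tendsto p (𝓝[>] (0:ℝ)) (𝓝 1) := (tendsto_one_sub_rpow α).mono_left nhdsWithin_le_nhds
  have hlq : Tendsto q (𝓝[>] (0:ℝ)) (𝓝 1) :=
    (tendsto_one_sub_rpow (α - 1)).mono_left nhdsWithin_le_nhds
  have hlw : Tendsto w (𝓝[>] (0:ℝ)) (𝓝 1) :=
    (tendsto_one_sub_rpow (α - 2)).mono_left nhdsWithin_le_nhds
  -- limits of F, G, H, F2, G2 at 0⁺ are 0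
  have hlF : Tendsto F (𝓝[>] (0:ℝ)) (𝓝 0) := by
    have : Tendsto F (𝓝[>] (0:ℝ)) (𝓝 (α * 0 - (1 - 0) * (1 - 1))) := by
      exact ((tendsto_const_nhds.mul
        (tendsto_id.mono_left nhdsWithin_le_nhds)).sub
        (((tendsto_const_nhds.sub (tendsto_id.mono_left nhdsWithin_le_nhds))).mul
          (tendsto_const_nhds.sub hlp)))
    simpa using this
  have hlG : Tendsto G (𝓝[>] (0:ℝ)) (𝓝 0) := by
    have : Tendsto G (𝓝[>] (0:ℝ)) (𝓝 ((1 - 1) ^ 2)) := (tendsto_const_nhds.sub hlp).pow 2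
    simpa using this
  have hlH : Tendsto H (𝓝[>] (0:ℝ)) (𝓝 0) := by
    have : Tendsto H (𝓝[>] (0:ℝ)) (𝓝 (α * 1 * 0 - (1 - 1))) :=
      ((tendsto_const_nhds.mul hlp).mul (tendsto_id.mono_left nhdsWithin_le_nhds)).sub
        (tendsto_const_nhds.sub hlp)
    simpa using this
  have hlF2 : Tendsto F2 (𝓝[>] (0:ℝ)) (𝓝 0) := by
    have : Tendsto F2 (𝓝[>] (0:ℝ)) (𝓝 (α + 1 - 1 - α * 1)) :=
      ((tendsto_const_nhds.sub hlp)).sub (tendsto_const_nhds.mul hlp)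
    simpa using this
  have hlG2 : Tendsto G2 (𝓝[>] (0:ℝ)) (𝓝 0) := by
    have : Tendsto G2 (𝓝[>] (0:ℝ)) (𝓝 (2 * α * (1 - 1) * 1)) :=
      ((tendsto_const_nhds.mul (tendsto_const_nhds.sub hlp))).mul hlq
    simpa using this
  have hlH2 : Tendsto H2 (𝓝[>] (0:ℝ)) (𝓝 0) := by
    have : Tendsto H2 (𝓝[>] (0:ℝ)) (𝓝 (α * 1 - α ^ 2 * 0 * 1 - α * 1)) :=
      ((tendsto_const_nhds.mul hlp).sub
        ((tendsto_const_nhds.mul (tendsto_id.mono_left nhdsWithin_le_nhds)).mul hlq)).sub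
        (tendsto_const_nhds.mul hlq)
    simpa using this
  -- limits of F3, G3, H3
  have hlF3 : Tendsto F3 (𝓝[>] (0:ℝ)) (𝓝 (α + α ^ 2)) := by
    have : Tendsto F3 (𝓝[>] (0:ℝ)) (𝓝 (α * 1 + α ^ 2 * 1)) :=
      (tendsto_const_nhds.mul hlq).add (tendsto_const_nhds.mul hlq)
    simpa using this
  have hlG3 : Tendsto G3 (𝓝[>] (0:ℝ)) (𝓝 (2 * α ^ 2)) := by
    have : Tendsto G3 (𝓝[>] (0:ℝ))
        (𝓝 (2 * α * (α * 1 ^ 2 - (α - 1) * (1 - 1) * 1))) :=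
      tendsto_const_nhds.mul ((tendsto_const_nhds.mul (hlq.pow 2)).sub
        ((tendsto_const_nhds.mul (tendsto_const_nhds.sub hlp)).mul hlw))
    convert this using 2
    ring
  have hlH3 : Tendsto H3 (𝓝[>] (0:ℝ)) (𝓝 (-(α ^ 2) - α ^ 2 + α * (α - 1))) := by
    have : Tendsto H3 (𝓝[>] (0:ℝ))
        (𝓝 (-(α ^ 2 * 1) - α ^ 2 * 1 + α ^ 2 * (α - 1) * 0 * 1 + α * (α - 1) * 1)) :=
      ((((tendsto_const_nhds.mul hlq).neg).sub (tendsto_const_nhds.mul hlq)).add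
        ((tendsto_const_nhds.mul (tendsto_id.mono_left nhdsWithin_le_nhds)).mul hlw)).add
        (tendsto_const_nhds.mul hlw)
    convert this using 2
    ring
  -- nonvanishing of G2 and G3 near 0⁺
  have hG2ne : ∀ᶠ t in 𝓝[>] (0:ℝ), G2 t ≠ 0 := by
    filter_upwards [hIoo] with t ht
    have := hplt t ht
    have := hqpos t ht
    positivity
  have hG3ne : ∀ᶠ t in 𝓝[>] (0:ℝ), G3 t ≠ 0 := by
    have h2 : (0:ℝ) < 2 * α ^ 2 := by positivity
    filter_upwards [hlG3.eventually (eventually_gt_nhds (by linarith : (0:ℝ) < 2 * α ^ 2))]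
      with t ht
    exact ne_of_gt ht
  -- L'Hôpital, inner level : F2/G2 and H2/G2
  have hdivF2 : Tendsto (fun t => F2 t / G2 t) (𝓝[>] (0:ℝ)) (𝓝 ((α + α ^ 2) / (2 * α ^ 2))) := by
    apply HasDerivAt.lhopital_zero_nhdsGT
      (Filter.eventually_of_mem hIoo hderF2)
      (Filter.eventually_of_mem hIoo hderG2) hG3ne hlF2 hlG2
    exact hlF3.div hlG3 (by positivity)
  have hdivH2 : Tendsto (fun t => H2 t / G2 t) (𝓝[>] (0:ℝ))
      (𝓝 ((-(α ^ 2) - α ^ 2 + α * (α - 1)) / (2 * α ^ 2))) := by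
    apply HasDerivAt.lhopital_zero_nhdsGT
      (Filter.eventually_of_mem hIoo hderH2) (Filter.eventually_of_mem hIoo hderG2)
      hG3ne hlH2 hlG2
    exact hlH3.div hlG3 (by positivity)
  -- L'Hôpital, outer level : F/G and H/G
  have hdivF : Tendsto (fun t => F t / G t) (𝓝[>] (0:ℝ)) (𝓝 ((α + α ^ 2) / (2 * α ^ 2))) :=
    HasDerivAt.lhopital_zero_nhdsGT
      (Filter.eventually_of_mem hIoo hderF) (Filter.eventually_of_mem hIoo hderG)
      hG2ne hlF hlG hdivF2
  have hdivH : Tendsto (fun t => H t / G t) (𝓝[>] (0:ℝ))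
      (𝓝 ((-(α ^ 2) - α ^ 2 + α * (α - 1)) / (2 * α ^ 2))) :=
    HasDerivAt.lhopital_zero_nhdsGT
      (Filter.eventually_of_mem hIoo hderH) (Filter.eventually_of_mem hIoo hderG)
      hG2ne hlH hlG hdivH2
  -- the composite function Φ
  set Φ : ℝ → ℝ := fun t => p t * (F t / G t) ^ 2 * (1 - p t) + (H t / G t) ^ 2 * (1 - p t)
    with hΦ_def
  have hlΦ : Tendsto Φ (𝓝[>] (0:ℝ)) (𝓝 0) := by
    have : Tendsto Φ (𝓝[>] (0:ℝ))
        (𝓝 (1 * ((α + α ^ 2) / (2 * α ^ 2)) ^ 2 * (1 - 1)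
          + ((-(α ^ 2) - α ^ 2 + α * (α - 1)) / (2 * α ^ 2)) ^ 2 * (1 - 1))) :=
      (((hlp.mul (hdivF.pow 2)).mul (tendsto_const_nhds.sub hlp))).add
        ((hdivH.pow 2).mul (tendsto_const_nhds.sub hlp))
    simpa using this
  -- r ↦ r² tends to 0⁺
  have hsq : Tendsto (fun r : ℝ => r ^ 2) (𝓝[>] (0:ℝ)) (𝓝[>] (0:ℝ)) := by
    rw [tendsto_nhdsWithin_iff]
    constructor
    · have : Tendsto (fun r : ℝ => r ^ 2) (𝓝 (0:ℝ)) (𝓝 (0 ^ 2)) :=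
        (continuous_pow 2).continuousAt.tendsto
      simpa using this.mono_left nhdsWithin_le_nhds
    · filter_upwards [self_mem_nhdsWithin] with r hr
      exact pow_pos (Set.mem_Ioi.mp hr) 2
  -- final congruence
  have heq : ∀ᶠ r in 𝓝[>] (0:ℝ), Φ (r ^ 2) = pairCorrelation α r := by
    have hIoo1 : Set.Ioo (0:ℝ) 1 ∈ 𝓝[>] (0:ℝ) :=
      Ioo_mem_nhdsGT_of_mem ⟨le_refl 0, zero_lt_one⟩
    filter_upwards [hIoo1] with r hr
    have ht : r ^ 2 ∈ Set.Ioo (0:ℝ) 1 := ⟨pow_pos hr.1 2, by nlinarith [hr.1, hr.2]⟩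
    have hfne : 1 - p (r ^ 2) ≠ 0 := ne_of_gt (hplt _ ht)
    simp only [hΦ_def, hF_def, hG_def, hH_def, hp_def, pairCorrelation]
    have hs : 1 - (1 - r ^ 2) = r ^ 2 := by ring
    field_simp
    ring
  exact (hlΦ.comp hsq).congr' heq
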